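/- Let m ≥ 2 be an integer. For every x ∈ ℝ and every s ∈ ℂ, the series ∑_{k=0}^∞ H_{k+m}(x) s^k / ( k! ( ∏_{j=1}^m (k + j) )^{3/2} ) converges absolutely, the integral below converges, and ∑_{k=0}^∞ H_{k+m}(x) s^k / ( k! ( ∏_{j=1}^m (k + j) )^{3/2} ) = (2/√π)^m ∫_0^∞ ϖ_m(t) exp(2 x s e^{−t} − s² e^{−2t}) H_m(x − s e^{−t}) dt. -/

import Mathlib

open MeasureTheory

/-- The physicists' Hermite polynomials, evaluated at complex arguments:
`H_0 = 1`, `H_1(x) = 2x`, `H_{n+1}(x) = 2x H_n(x) − 2n H_{n−1}(x)`. -/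
noncomputable def hermiteC : ℕ → ℂ → ℂ
  | 0, _ => 1
  | 1, x => 2 * x
  | (n + 2), x => 2 * x * hermiteC (n + 1) x - 2 * ((n : ℂ) + 1) * hermiteC n x

/-- The convolution `(f * g)(x) = ∫_0^x f(x−y) g(y) dy` of functions on `[0,∞)`. -/
noncomputable def rconv (f g : ℝ → ℝ) (x : ℝ) : ℝ := ∫ y in (0 : ℝ)..x, f (x - y) * g y

/-- The iterated convolution `ϖ_m = (√t e^{−t}) * (√t e^{−2t}) * ⋯ * (√t e^{−mt})`
(meaningful for `m ≥ 1`; the value at `0` is junk). -/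
noncomputable def varpi : ℕ → ℝ → ℝ
  | 0 => fun _ => 0
  | 1 => fun t => Real.sqrt t * Real.exp (-t)
  | (m + 2) => rconv (varpi (m + 1)) (fun t => Real.sqrt t * Real.exp (-((m : ℝ) + 2) * t))

/-!
Taylor expansion of the entire function `w ↦ e^{2xw - w²} H_m(x - w)` at `0` gives
`∑_k H_{k+m}(x) w^k / k!`. Put `w = s e^{-t}`, multiply by `ϖ_m(t)` and integrate term by term:
the `k`-th term picks up the Laplace transform `∫ ϖ_m(t) e^{-kt} dt`. As `ϖ_m` is a convolution on
the half-line, this is the product of the Laplace transforms `Γ(3/2) / (k + j)^{3/2}` of its factors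
`√t e^{-jt}`, which is `(√π/2)^m / (∏_j (k + j))^{3/2}`. Sum and integral may be swapped because
the Taylor series of an entire function converges absolutely.
-/

open Filter Topology
open scoped Nat

lemma hermiteC_succ (n : ℕ) (z : ℂ) :
    hermiteC (n + 1) z = 2 * z * hermiteC n z - 2 * n * hermiteC (n - 1) z := by
  cases n with
  | zero => simp [hermiteC]
  | succ n => simp [hermiteC]

lemma hasDerivAt_hermiteC : ∀ (n : ℕ) (z : ℂ),
    HasDerivAt (hermiteC n) (2 * n * hermiteC (n - 1) z) z
  | 0, z => by simpa [hermiteC] using hasDerivAt_const z (1 : ℂ)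
  | 1, z => by simpa [hermiteC] using (hasDerivAt_id z).const_mul (2 : ℂ)
  | n + 2, z => by
    have h := (((hasDerivAt_id z).const_mul 2).mul (hasDerivAt_hermiteC (n + 1) z)).sub
      ((hasDerivAt_hermiteC n z).const_mul (2 * ((n : ℂ) + 1)))
    have hfun : hermiteC (n + 2) =
        (fun w => 2 * id w) * hermiteC (n + 1) - fun w => 2 * ((n : ℂ) + 1) * hermiteC n w := by
      ext w; simp [hermiteC]
    rw [hfun]
    refine h.congr_deriv ?_
    rw [show n + 2 - 1 = n + 1 from rfl, hermiteC_succ, id]; push_cast; ring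

noncomputable def hermiteGenFun (m : ℕ) (z w : ℂ) : ℂ :=
  Complex.exp (2 * z * w - w ^ 2) * hermiteC m (z - w)

lemma hasDerivAt_hermiteGenFun (m : ℕ) (z w : ℂ) :
    HasDerivAt (hermiteGenFun m z) (hermiteGenFun (m + 1) z w) w := by
  have hexp : HasDerivAt (fun w => Complex.exp (2 * z * w - w ^ 2))
      (Complex.exp (2 * z * w - w ^ 2) * (2 * z - 2 * w)) w := by
    have := ((hasDerivAt_id w).const_mul (2 * z)).sub (hasDerivAt_pow 2 w)
    simpa using this.cexp
  have hherm := (hasDerivAt_hermiteC m (z - w)).comp w ((hasDerivAt_id w).const_sub z)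
  refine (hexp.mul hherm).congr_deriv ?_
  simp only [hermiteGenFun, hermiteC_succ, Function.comp_apply]
  ring

lemma differentiable_hermiteGenFun (m : ℕ) (z : ℂ) : Differentiable ℂ (hermiteGenFun m z) :=
  fun w => (hasDerivAt_hermiteGenFun m z w).differentiableAt

lemma iteratedDeriv_hermiteGenFun (m : ℕ) (z : ℂ) :
    ∀ k, iteratedDeriv k (hermiteGenFun m z) = hermiteGenFun (m + k) z
  | 0 => iteratedDeriv_zero
  | k + 1 => by
    rw [iteratedDeriv_succ, iteratedDeriv_hermiteGenFun m z k]
    exact funext fun w => (hasDerivAt_hermiteGenFun (m + k) z w).deriv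

lemma iteratedDeriv_hermiteGenFun_zero (m k : ℕ) (z : ℂ) :
    iteratedDeriv k (hermiteGenFun m z) 0 = hermiteC (k + m) z := by
  rw [iteratedDeriv_hermiteGenFun, hermiteGenFun, add_comm]
  simp

lemma Complex.summable_norm_taylorSeries_of_entire {f : ℂ → ℂ} (hf : Differentiable ℂ f)
    (c z : ℂ) : Summable fun n => ‖(n ! : ℂ)⁻¹ • (z - c) ^ n • iteratedDeriv n f c‖ := by
  -- the terms at `c + 2 (z - c)` tend to zero, and those at `z` are `2⁻ⁿ` times them
  set u : ℕ → ℂ := fun n => (n ! : ℂ)⁻¹ • (c + 2 * (z - c) - c) ^ n • iteratedDeriv n f c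
  have hu : Tendsto u atTop (𝓝 0) :=
    (hasSum_taylorSeries_of_entire hf c _).summable.tendsto_atTop_zero
  refine (summable_norm_mul_geometric_of_norm_lt_one' (k := 0) (r := (1 / 2 : ℂ))
    (by norm_num) (u := u) (by simpa only [pow_zero, Nat.cast_one] using hu.isBigO_one ℂ)).congr
    fun n => ?_
  simp only [u, smul_eq_mul, add_sub_cancel_left, mul_pow]
  congr 1
  rw [one_div, inv_pow]
  field_simp

lemma hasSum_hermiteC_mul_pow_div_factorial (m : ℕ) (z w : ℂ) :
    HasSum (fun k => hermiteC (k + m) z * w ^ k / k !) (hermiteGenFun m z w) := by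
  refine (Complex.hasSum_taylorSeries_of_entire
    (differentiable_hermiteGenFun m z) 0 w).congr_fun fun k => ?_
  rw [iteratedDeriv_hermiteGenFun_zero, sub_zero, smul_eq_mul, smul_eq_mul]
  field_simp

lemma summable_norm_hermiteC_mul_pow_div_factorial (m : ℕ) (z w : ℂ) :
    Summable fun k => ‖hermiteC (k + m) z * w ^ k / (k ! : ℂ)‖ := by
  refine (Complex.summable_norm_taylorSeries_of_entire
    (differentiable_hermiteGenFun m z) 0 w).congr fun k => ?_
  rw [iteratedDeriv_hermiteGenFun_zero, sub_zero, smul_eq_mul, smul_eq_mul]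
  field_simp

open Real Set Finset
open scoped Convolution
open ContinuousLinearMap (mul)

section HalfLine

variable {E : Type*} [NormedAddCommGroup E] {f : ℝ → E}

lemma integrable_iff_integrableOn_Ioi_of_nonpos (hf : ∀ t ≤ 0, f t = 0) :
    Integrable f ↔ IntegrableOn f (Ioi 0) := by
  rw [← integrable_indicator_iff measurableSet_Ioi, indicator_eq_self.2]
  intro t ht
  by_contra h
  exact ht (hf t (not_lt.1 h))

lemma integral_eq_setIntegral_Ioi_of_nonpos [NormedSpace ℝ E] (hf : ∀ t ≤ 0, f t = 0) :
    ∫ t, f t = ∫ t in Ioi 0, f t :=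
  (setIntegral_eq_integral_of_forall_compl_eq_zero fun t ht => hf t (not_lt.1 ht)).symm

end HalfLine

lemma sqrt_mul_of_nonpos {t : ℝ} (ht : t ≤ 0) (c : ℝ) : √t * c = 0 := by
  rw [sqrt_eq_zero'.2 ht, zero_mul]

lemma Gamma_three_div_two : Gamma (3 / 2) = √π / 2 := by
  simpa [-one_div, show (1 : ℝ) + 1 / 2 = 3 / 2 by norm_num] using Gamma_nat_add_one_add_half 0

lemma integrable_sqrt_mul_exp_neg_mul {b : ℝ} (hb : 0 < b) :
    Integrable fun t => √t * exp (-b * t) := by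
  rw [integrable_iff_integrableOn_Ioi_of_nonpos fun _ ht => sqrt_mul_of_nonpos ht _]
  refine (integrableOn_rpow_mul_exp_neg_mul_rpow (s := 1 / 2) (p := 1) (by norm_num) one_pos hb)
    |>.congr_fun (fun t _ => ?_) measurableSet_Ioi
  simp only [rpow_one, sqrt_eq_rpow]

lemma integral_sqrt_mul_exp_neg_mul {b : ℝ} (hb : 0 < b) :
    ∫ t, √t * exp (-b * t) = Gamma (3 / 2) / b ^ (3 / 2 : ℝ) := by
  rw [integral_eq_setIntegral_Ioi_of_nonpos fun _ ht => sqrt_mul_of_nonpos ht _]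
  have h := integral_rpow_mul_exp_neg_mul_Ioi (a := 3 / 2) (by norm_num) hb
  rw [show (3 / 2 : ℝ) - 1 = 1 / 2 by norm_num, div_rpow zero_le_one hb.le, one_rpow,
    div_mul_eq_mul_div, one_mul] at h
  rw [← h]
  refine setIntegral_congr_fun measurableSet_Ioi fun t _ => ?_
  rw [sqrt_eq_rpow, neg_mul]

section HalfLineConvolution

variable {f g : ℝ → ℝ}

lemma rconv_of_nonpos (hg : ∀ t ≤ 0, g t = 0) {x : ℝ} (hx : x ≤ 0) : rconv f g x = 0 := by
  rw [rconv, intervalIntegral.integral_symm, intervalIntegral.integral_of_le hx,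
    setIntegral_eq_zero_of_forall_eq_zero fun y hy => by rw [hg y hy.2, mul_zero], neg_zero]

lemma rconv_eq_convolution (hf : ∀ t ≤ 0, f t = 0) (hg : ∀ t ≤ 0, g t = 0) (x : ℝ) :
    rconv f g x = (g ⋆[mul ℝ ℝ] f) x := by
  have hsupp : ∀ y ∉ Ioc 0 x, g y * f (x - y) = 0 := fun y hy => by
    rcases le_or_gt y 0 with hy0 | hy0
    · rw [hg y hy0, zero_mul]
    · rw [hf (x - y) (by linarith [not_and.1 hy hy0]), mul_zero]
  rw [convolution_mul, ← setIntegral_eq_integral_of_forall_compl_eq_zero hsupp]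
  rcases le_or_gt x 0 with hx | hx
  · rw [rconv_of_nonpos hg hx, Ioc_eq_empty_of_le hx, Measure.restrict_empty, integral_zero_measure]
  · rw [rconv, intervalIntegral.integral_of_le hx.le]
    simp_rw [mul_comm (f _)]

lemma convolution_mul_exp (f g : ℝ → ℝ) (a x : ℝ) :
    (f ⋆[mul ℝ ℝ] g) x * exp (-a * x) =
      ((fun t => f t * exp (-a * t)) ⋆[mul ℝ ℝ] fun t => g t * exp (-a * t)) x := by
  simp only [convolution_mul, ← integral_mul_const]
  congr 1 with t
  rw [show -a * x = -a * t + -a * (x - t) by ring, exp_add]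
  ring

end HalfLineConvolution

lemma varpi_succ_succ (m : ℕ) :
    varpi (m + 2) = rconv (varpi (m + 1)) fun t => √t * exp (-((m : ℝ) + 2) * t) := rfl

lemma varpi_of_nonpos : ∀ (m : ℕ) {t : ℝ}, t ≤ 0 → varpi (m + 1) t = 0
  | 0, t, ht => by simp [varpi, sqrt_eq_zero'.2 ht]
  | m + 1, t, ht => rconv_of_nonpos (fun _ ht => sqrt_mul_of_nonpos ht _) ht

lemma varpi_nonneg : ∀ (m : ℕ) (t : ℝ), 0 ≤ varpi (m + 1) t
  | 0, t => by simp only [varpi]; positivity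
  | m + 1, t => by
    rcases le_or_gt t 0 with ht | ht
    · rw [varpi_of_nonpos (m + 1) ht]
    · rw [varpi_succ_succ, rconv]
      refine intervalIntegral.integral_nonneg ht.le fun y _ => ?_
      have := varpi_nonneg m (t - y)
      positivity

lemma varpi_laplace (m : ℕ) {a : ℝ} (ha : -1 < a) :
    Integrable (fun t => varpi (m + 1) t * exp (-a * t)) ∧
      ∫ t, varpi (m + 1) t * exp (-a * t) =
        Gamma (3 / 2) ^ (m + 1) / (∏ j ∈ Icc 1 (m + 1), (a + j)) ^ (3 / 2 : ℝ) := by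
  induction m with
  | zero =>
    have hfun : (fun t => varpi 1 t * exp (-a * t)) = fun t => √t * exp (-(a + 1) * t) := by
      ext t
      rw [varpi, mul_assoc, ← exp_add]
      ring_nf
    rw [hfun]
    refine ⟨integrable_sqrt_mul_exp_neg_mul (by linarith), ?_⟩
    rw [integral_sqrt_mul_exp_neg_mul (by linarith)]
    simp
  | succ m ih =>
    set b : ℝ := a + (m + 2)
    have hb : 0 < b := by have := m.cast_nonneg (α := ℝ); linarith
    set K : ℝ → ℝ := fun t => √t * exp (-b * t)
    have hconv : (fun t => varpi (m + 2) t * exp (-a * t)) =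
        K ⋆[mul ℝ ℝ] fun t => varpi (m + 1) t * exp (-a * t) := by
      ext x
      rw [varpi_succ_succ, rconv_eq_convolution (fun _ => varpi_of_nonpos m)
        (fun _ ht => sqrt_mul_of_nonpos ht _), convolution_mul_exp]
      congr 1 with t
      simp only [K, b, mul_assoc, ← exp_add]
      ring_nf
    rw [hconv]
    refine ⟨(integrable_sqrt_mul_exp_neg_mul hb).integrable_convolution _ ih.1, ?_⟩
    have hP : 0 ≤ ∏ j ∈ Icc 1 (m + 1), (a + j) := prod_nonneg fun j hj => by
      have : (1 : ℝ) ≤ j := by exact_mod_cast (mem_Icc.1 hj).1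
      linarith
    rw [integral_convolution _ (integrable_sqrt_mul_exp_neg_mul hb) ih.1,
      ContinuousLinearMap.mul_apply', integral_sqrt_mul_exp_neg_mul hb, ih.2,
      prod_Icc_succ_top (by omega : 1 ≤ m + 2), show a + ((m + 2 : ℕ) : ℝ) = b by push_cast; rfl,
      mul_rpow hP hb.le]
    ring

noncomputable def hermiteSeriesTerm (m : ℕ) (z s : ℂ) (k : ℕ) : ℂ :=
  hermiteC (k + m) z * s ^ k /
    ((k ! : ℂ) * (((∏ j ∈ Icc 1 m, ((k : ℝ) + (j : ℝ))) ^ ((3 : ℝ) / 2) : ℝ) : ℂ))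

lemma one_le_prod_Icc_add (m k : ℕ) : 1 ≤ ∏ j ∈ Icc 1 m, ((k : ℝ) + (j : ℝ)) :=
  one_le_prod fun j hj => by
    have : (1 : ℝ) ≤ j := by exact_mod_cast (mem_Icc.1 hj).1
    linarith [k.cast_nonneg (α := ℝ)]

lemma hermiteSeriesTerm_eq_div (m : ℕ) (z s : ℂ) (k : ℕ) :
    hermiteSeriesTerm m z s k = hermiteC (k + m) z * s ^ k / k ! /
      (((∏ j ∈ Icc 1 m, ((k : ℝ) + (j : ℝ))) ^ ((3 : ℝ) / 2) : ℝ) : ℂ) :=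
  div_mul_eq_div_div _ _ _

lemma summable_norm_hermiteSeriesTerm (m : ℕ) (z s : ℂ) :
    Summable fun k => ‖hermiteSeriesTerm m z s k‖ := by
  refine (summable_norm_hermiteC_mul_pow_div_factorial m z s).of_nonneg_of_le
    (fun k => norm_nonneg _) fun k => ?_
  rw [hermiteSeriesTerm_eq_div, norm_div, Complex.norm_real,
    norm_of_nonneg (rpow_nonneg (zero_le_one.trans (one_le_prod_Icc_add m k)) _)]
  exact div_le_self (norm_nonneg _) (one_le_rpow (one_le_prod_Icc_add m k) (by norm_num))

lemma integrableOn_varpi_mul_comp_exp_neg (m : ℕ) {g : ℂ → ℂ} (hg : Continuous g) (s : ℂ) :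
    IntegrableOn (fun t : ℝ => (varpi (m + 1) t : ℂ) * g (s * (exp (-t) : ℝ))) (Ioi 0) := by
  obtain ⟨C, hC⟩ := (isCompact_closedBall (0 : ℂ) ‖s‖).exists_bound_of_continuousOn hg.continuousOn
  have hϖ : Integrable (varpi (m + 1)) := by simpa using (varpi_laplace m neg_one_lt_zero).1
  refine hϖ.ofReal.integrableOn.mul_bdd (by fun_prop) ((ae_restrict_iff' measurableSet_Ioi).2
    (ae_of_all _ fun t ht => hC _ ?_))
  rw [Metric.mem_closedBall, dist_zero_right, norm_mul, Complex.norm_real,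
    norm_of_nonneg (exp_pos _).le]
  exact mul_le_of_le_one_right (norm_nonneg s) (exp_le_one_iff.2 (by linarith [mem_Ioi.1 ht]))

lemma hermiteGenFun_mul_exp_neg (m : ℕ) (z s : ℂ) (t : ℝ) :
    hermiteGenFun m z (s * (exp (-t) : ℝ)) =
      Complex.exp (2 * z * s * ((exp (-t) : ℝ) : ℂ) - s ^ 2 * ((exp (-2 * t) : ℝ) : ℂ)) *
        hermiteC m (z - s * ((exp (-t) : ℝ) : ℂ)) := by
  rw [hermiteGenFun, show -2 * t = -t + -t by ring, exp_add]
  push_cast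
  ring_nf

lemma hasSum_exp_neg_mul_hermiteC (m : ℕ) (z s : ℂ) (t : ℝ) :
    HasSum (fun k : ℕ => ((exp (-k * t) : ℝ) : ℂ) * (hermiteC (k + m) z * s ^ k / k !))
      (hermiteGenFun m z (s * (exp (-t) : ℝ))) := by
  refine (hasSum_hermiteC_mul_pow_div_factorial m z _).congr_fun fun k => ?_
  rw [show exp (-k * t) = exp (-t) ^ k by rw [← exp_nat_mul]; ring_nf]
  push_cast
  ring

lemma hasSum_hermiteSeriesTerm (m : ℕ) (z s : ℂ) :
    HasSum (hermiteSeriesTerm (m + 1) z s) ((((2 / √π) ^ (m + 1) : ℝ) : ℂ) *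
      ∫ t in Ioi 0, (varpi (m + 1) t : ℂ) * hermiteGenFun (m + 1) z (s * (exp (-t) : ℝ))) := by
  set c : ℕ → ℂ := fun k => hermiteC (k + (m + 1)) z * s ^ k / (k ! : ℂ)
  set L : ℕ → ℝ := fun k =>
    Gamma (3 / 2) ^ (m + 1) / (∏ j ∈ Icc 1 (m + 1), ((k : ℝ) + (j : ℝ))) ^ ((3 : ℝ) / 2)
  set F : ℕ → ℝ → ℂ := fun k t => ((varpi (m + 1) t * exp (-k * t) : ℝ) : ℂ) * c k
  have hlaplace (k : ℕ) := varpi_laplace m (a := k) (by linarith [k.cast_nonneg (α := ℝ)])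
  have hF_int (k : ℕ) : Integrable (F k) := ((hlaplace k).1.ofReal).mul_const _
  have hF_norm (k : ℕ) : ∫ t, ‖F k t‖ = L k * ‖c k‖ := by
    simp only [F, norm_mul, Complex.norm_real, norm_of_nonneg
      (mul_nonneg (varpi_nonneg m _) (exp_pos _).le), integral_mul_const, (hlaplace k).2, L]
  have hF_sum : Summable fun k => ∫ t, ‖F k t‖ := by
    refine ((summable_norm_hermiteSeriesTerm (m + 1) z s).mul_left (Gamma (3 / 2) ^ (m + 1))).congr
      fun k => ?_
    rw [hF_norm, hermiteSeriesTerm_eq_div, norm_div, Complex.norm_real, norm_of_nonneg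
      (rpow_nonneg (zero_le_one.trans (one_le_prod_Icc_add _ k)) _)]
    simp only [L, c]
    ring
  have hF_tsum (t : ℝ) :
      ∑' k, F k t = (varpi (m + 1) t : ℂ) * hermiteGenFun (m + 1) z (s * (exp (-t) : ℝ)) := by
    simp only [F, Complex.ofReal_mul, mul_assoc]
    exact ((hasSum_exp_neg_mul_hermiteC (m + 1) z s t).mul_left _).tsum_eq
  have hsum := hasSum_integral_of_summable_integral_norm hF_int hF_sum
  simp only [hF_tsum] at hsum
  rw [integral_eq_setIntegral_Ioi_of_nonpos fun t ht => by
    rw [varpi_of_nonpos m ht, Complex.ofReal_zero, zero_mul]] at hsum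
  refine (hsum.mul_left _).congr_fun fun k => ?_
  have hconst : (2 / √π) ^ (m + 1) * Gamma (3 / 2) ^ (m + 1) = 1 := by
    rw [← mul_pow, Gamma_three_div_two, div_mul_div_comm, mul_comm 2,
      div_self (mul_ne_zero (sqrt_pos.2 pi_pos).ne' two_ne_zero), one_pow]
  rw [integral_mul_const, integral_complex_ofReal, (hlaplace k).2, hermiteSeriesTerm_eq_div,
    ← mul_assoc, ← Complex.ofReal_mul, mul_div_assoc' ((2 / √π) ^ (m + 1)), hconst]
  simp only [c]
  push_cast
  ring

theorem stmt14 (m : ℕ) (hm : 2 ≤ m) (x : ℝ) (s : ℂ) :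
    Summable (fun k : ℕ =>
      ‖hermiteC (k + m) (x : ℂ) * s ^ k /
        ((k.factorial : ℂ) *
          ((((∏ j ∈ Finset.Icc 1 m, ((k : ℝ) + (j : ℝ))) ^ ((3 : ℝ) / 2)) : ℝ) : ℂ))‖) ∧
    IntegrableOn (fun t : ℝ =>
      ((varpi m t : ℝ) : ℂ) *
        (Complex.exp (2 * (x : ℂ) * s * ((Real.exp (-t) : ℝ) : ℂ)
            - s ^ 2 * ((Real.exp (-2 * t) : ℝ) : ℂ)) *
          hermiteC m ((x : ℂ) - s * ((Real.exp (-t) : ℝ) : ℂ)))) (Set.Ioi 0) ∧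
    (∑' k : ℕ, hermiteC (k + m) (x : ℂ) * s ^ k /
        ((k.factorial : ℂ) *
          ((((∏ j ∈ Finset.Icc 1 m, ((k : ℝ) + (j : ℝ))) ^ ((3 : ℝ) / 2)) : ℝ) : ℂ))) =
      (((2 / Real.sqrt Real.pi) ^ m : ℝ) : ℂ) *
        ∫ t in Set.Ioi (0 : ℝ),
          ((varpi m t : ℝ) : ℂ) *
            (Complex.exp (2 * (x : ℂ) * s * ((Real.exp (-t) : ℝ) : ℂ)
                - s ^ 2 * ((Real.exp (-2 * t) : ℝ) : ℂ)) *
              hermiteC m ((x : ℂ) - s * ((Real.exp (-t) : ℝ) : ℂ))) := by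
  obtain ⟨n, rfl⟩ : ∃ n, m = n + 1 := ⟨m - 1, by omega⟩
  simp only [← hermiteGenFun_mul_exp_neg]
  exact ⟨summable_norm_hermiteSeriesTerm _ _ _,
    integrableOn_varpi_mul_comp_exp_neg n (differentiable_hermiteGenFun _ _).continuous s,
    (hasSum_hermiteSeriesTerm n x s).tsum_eq⟩
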